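/- Let g : ℝⁿ → ℝ be continuously differentiable and let φ : ℝⁿ → ℝ ∪ {+∞} be a proper polyhedral convex function. Let x̄ satisfy −∇g(x̄) ∈ ∂φ(x̄), set ψ = g + φ, K = N_{∂φ(x̄)}(−∇g(x̄)), and ψ̃(x) = g(x) − ⟨∇g(x̄), x − x̄⟩ + ι_K(x − x̄). If x̄ is a local minimizer of ψ, then x̄ is also a local minimizer of ψ̃, and the sets Ω := {x : ψ(x) = ψ(x̄)} and Ω̃ := {x : ψ̃(x) = ψ̃(x̄)} coincide on some neighborhood of x̄. -/

import Mathlib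

/-!
Near `x̄` a polyhedral `φ` equals `φ(x̄) + h(· - x̄)`, where `h d = maxᵢ ⟪aᵢ, d⟫` on the
polyhedral cone `T = {d | ∀ k, ⟪bₖ, d⟫ ≤ 0}` and `h = +∞` off `T`. Hence
`∂φ(x̄) = {ξ | ⟪ξ, ·⟫ ≤ h on T}` and `K = {d ∈ T | h d ≤ ⟪-∇g(x̄), d⟫}`; since `-∇g(x̄) ∈ ∂φ(x̄)`,
in fact `h d = ⟪-∇g(x̄), d⟫` on `K`, so `ψ̃ = ψ - φ(x̄)` on `x̄ + K` near `x̄` and `ψ̃ = +∞` off it.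
This gives the local minimality of `ψ̃`, and for the level sets it remains to show that every `x`
near `x̄` with `ψ x = ψ x̄` has `x - x̄ ∈ K`. Such an `x` is again a local minimizer of `ψ`. If the
points violating this accumulated at `x̄`, infinitely many of them would share the same active
pieces of `h`; `h` is linear on such a cell, so for two of them `x, x₁` the map
`t ↦ ψ(x + t (x₁ - x̄))` is differentiable with a minimum at `t = 0`, whence
`⟪∇g(x), x₁ - x̄⟫ + h(x₁ - x̄) = 0`. Letting `x → x̄` yields `x₁ - x̄ ∈ K`.
-/

open scoped BigOperators

/-- The normal cone to a set `C` at `x` (empty if `x ∉ C`). -/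
def normalCone {n : ℕ} (C : Set (EuclideanSpace ℝ (Fin n)))
    (x : EuclideanSpace ℝ (Fin n)) : Set (EuclideanSpace ℝ (Fin n)) :=
  {ξ | x ∈ C ∧ ∀ y ∈ C, (inner ℝ ξ (y - x) : ℝ) ≤ 0}

/-- The convex subdifferential of an extended-real-valued function `φ` at `x`. -/
def ESubdiff {n : ℕ} (φ : EuclideanSpace ℝ (Fin n) → EReal)
    (x : EuclideanSpace ℝ (Fin n)) : Set (EuclideanSpace ℝ (Fin n)) :=
  {ξ | ∀ y, φ x + (((inner ℝ ξ (y - x) : ℝ)) : EReal) ≤ φ y}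

open Classical in
/-- The `EReal`-valued indicator function of a set `K` (0 on `K`, `+∞` outside). -/
noncomputable def eIndicator {n : ℕ} (K : Set (EuclideanSpace ℝ (Fin n)))
    (x : EuclideanSpace ℝ (Fin n)) : EReal :=
  if x ∈ K then 0 else ⊤

open Filter Set Topology RealInnerProductSpace

lemma eventually_add_mul_le_add_mul {α β γ δ : ℝ} (hle : α ≤ γ) (heq : α = γ → β = δ) :
    ∀ᶠ t in 𝓝 (0 : ℝ), α + t * β ≤ γ + t * δ := by
  rcases hle.lt_or_eq with hlt | rfl
  · have hcont : Continuous fun t : ℝ => (γ + t * δ) - (α + t * β) := by fun_prop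
    filter_upwards [(hcont.tendsto 0).eventually_const_lt (u := 0) (by simpa using hlt)] with t ht
    linarith
  · simp [heq rfl]

section PiecewiseLinear

variable {E : Type*} [NormedAddCommGroup E] [InnerProductSpace ℝ E] {ι κ : Type*}

lemma eventually_inner_add_smul_nonpos [Finite κ] {b : κ → E} {d e : E}
    (hd : ∀ k, ⟪b k, d⟫ ≤ 0) (hactive : ∀ k, ⟪b k, d⟫ = 0 → ⟪b k, e⟫ = 0) :
    ∀ᶠ t in 𝓝 (0 : ℝ), ∀ k, ⟪b k, d + t • e⟫ ≤ 0 := by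
  refine eventually_all.2 fun k => ?_
  filter_upwards [eventually_add_mul_le_add_mul (hd k) (hactive k)] with t ht
  simpa [inner_add_right, real_inner_smul_right] using ht

lemma eventually_ciSup_inner_add_smul [Finite ι] [Nonempty ι] {a : ι → E} {d e : E}
    (hactive : ∀ i, ⟪a i, d⟫ = ⨆ j, ⟪a j, d⟫ → ⟪a i, e⟫ = ⨆ j, ⟪a j, e⟫) :
    ∀ᶠ t in 𝓝 (0 : ℝ),
      ⨆ i, ⟪a i, d + t • e⟫ = (⨆ i, ⟪a i, d⟫) + t * ⨆ i, ⟪a i, e⟫ := by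
  have hbdd (x : E) : BddAbove (range fun i => ⟪a i, x⟫) := (finite_range _).bddAbove
  obtain ⟨i₀, hi₀⟩ := exists_eq_ciSup_of_finite (f := fun i => ⟪a i, d⟫)
  have hle : ∀ᶠ t in 𝓝 (0 : ℝ), ∀ i, ⟪a i, d⟫ + t * ⟪a i, e⟫ ≤
      (⨆ j, ⟪a j, d⟫) + t * ⨆ j, ⟪a j, e⟫ :=
    eventually_all.2 fun i => eventually_add_mul_le_add_mul (le_ciSup (hbdd d) i) (hactive i)
  filter_upwards [hle] with t ht
  simp only [inner_add_right, real_inner_smul_right]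
  refine le_antisymm (ciSup_le ht) ?_
  refine le_ciSup_of_le ?_ i₀ ?_
  · simpa only [inner_add_right, real_inner_smul_right] using hbdd (d + t • e)
  · rw [← hi₀, hactive i₀ hi₀]

lemma fderiv_apply_add_eq_zero_of_eventually_le {g : E → ℝ} {x e : E} {c : ℝ}
    (hg : DifferentiableAt ℝ g x) (hmin : ∀ᶠ t in 𝓝 (0 : ℝ), g x ≤ g (x + t • e) + t * c) :
    fderiv ℝ g x e + c = 0 := by
  have hline : HasDerivAt (fun t : ℝ => x + t • e) e 0 := by
    simpa using ((hasDerivAt_id (0 : ℝ)).smul_const e).const_add x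
  have hg' : HasFDerivAt g (fderiv ℝ g x) (x + (0 : ℝ) • e) := by simpa using hg.hasFDerivAt
  refine IsLocalMin.hasDerivAt_eq_zero ?_
    ((hg'.comp_hasDerivAt 0 hline).add (hasDerivAt_mul_const c))
  simpa [IsLocalMin, IsMinFilter] using hmin

variable [Finite ι] [Nonempty ι] [Finite κ] {a : ι → E} {b : κ → E} {x₀ : E}

lemma fderiv_apply_add_ciSup_eq_zero_of_isLocalMinOn {g : E → ℝ} {x e : E}
    (hg : DifferentiableAt ℝ g x)
    (hmin : IsLocalMinOn (fun y => g y + ⨆ i, ⟪a i, y - x₀⟫) {y | ∀ k, ⟪b k, y - x₀⟫ ≤ 0} x)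
    (hx : ∀ k, ⟪b k, x - x₀⟫ ≤ 0) (hb : ∀ k, ⟪b k, x - x₀⟫ = 0 → ⟪b k, e⟫ = 0)
    (ha : ∀ i, ⟪a i, x - x₀⟫ = ⨆ j, ⟪a j, x - x₀⟫ → ⟪a i, e⟫ = ⨆ j, ⟪a j, e⟫) :
    fderiv ℝ g x e + ⨆ i, ⟪a i, e⟫ = 0 := by
  refine fderiv_apply_add_eq_zero_of_eventually_le hg ?_
  have hline : Tendsto (fun t : ℝ => x + t • e) (𝓝 0) (𝓝 x) :=
    (by fun_prop : Continuous fun t : ℝ => x + t • e).tendsto' 0 x (by simp)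
  filter_upwards [hline.eventually (eventually_nhdsWithin_iff.1 hmin),
    eventually_inner_add_smul_nonpos hx hb, eventually_ciSup_inner_add_smul ha] with t ht hT hM
  simp only [add_sub_right_comm x, hM] at ht
  linarith [ht hT]

theorem eventually_fderiv_apply_add_ciSup_eq_zero {g : E → ℝ} (hg : ContDiff ℝ 1 g)
    (hmin : IsLocalMinOn (fun x => g x + ⨆ i, ⟪a i, x - x₀⟫) {x | ∀ k, ⟪b k, x - x₀⟫ ≤ 0} x₀) :
    ∀ᶠ x in 𝓝 x₀, (∀ k, ⟪b k, x - x₀⟫ ≤ 0) → g x + ⨆ i, ⟪a i, x - x₀⟫ = g x₀ →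
      fderiv ℝ g x₀ (x - x₀) + ⨆ i, ⟪a i, x - x₀⟫ = 0 := by
  set F := fun x => g x + ⨆ i, ⟪a i, x - x₀⟫
  set S := {x | ∀ k, ⟪b k, x - x₀⟫ ≤ 0}
  have hF₀ : F x₀ = g x₀ := by simp [F]
  have hlevel : ∀ᶠ x in 𝓝 x₀, F x = g x₀ → IsLocalMinOn F S x := by
    filter_upwards [(eventually_nhdsWithin_iff.1 hmin).eventually_nhds] with x hx hFx
    exact eventually_nhdsWithin_iff.2 (hx.mono fun y hy hyS => hFx.trans_le (hF₀ ▸ hy hyS))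
  by_contra hbad
  rw [not_eventually] at hbad
  -- finitely many patterns of active constraints, so one of them occurs frequently near `x₀`
  let active (x : E) : Set ι × Set κ :=
    ({i | ⟪a i, x - x₀⟫ = ⨆ j, ⟪a j, x - x₀⟫}, {k | ⟪b k, x - x₀⟫ = 0})
  obtain ⟨σ, hσ⟩ := frequently_exists.1
    ((hbad.and_eventually hlevel).mono fun x hx => (⟨active x, hx, rfl⟩ : ∃ σ, _ ∧ active x = σ))
  obtain ⟨x₁, ⟨hbad₁, -⟩, hσ₁⟩ := hσ.exists
  push Not at hbad₁
  have hzero : ∃ᶠ x in 𝓝 x₀, fderiv ℝ g x (x₁ - x₀) + ⨆ i, ⟪a i, x₁ - x₀⟫ = 0 := by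
    refine hσ.mono fun x ⟨⟨hx, hxmin⟩, hxσ⟩ => ?_
    push Not at hx
    refine fderiv_apply_add_ciSup_eq_zero_of_isLocalMinOn (hg.differentiable one_ne_zero x)
      (hxmin hx.2.1) hx.1 (fun k hk => ?_) (fun i hi => ?_)
    · have hk' : k ∈ (active x).2 := hk
      rwa [hxσ, ← hσ₁] at hk'
    · have hi' : i ∈ (active x).1 := hi
      rwa [hxσ, ← hσ₁] at hi'
  have hclosed : IsClosed {x | fderiv ℝ g x (x₁ - x₀) + ⨆ i, ⟪a i, x₁ - x₀⟫ = 0} :=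
    isClosed_eq (((hg.continuous_fderiv one_ne_zero).clm_apply continuous_const).add
      continuous_const) continuous_const
  exact hbad₁.2.2 (hclosed.mem_of_frequently_of_tendsto hzero tendsto_id)

end PiecewiseLinear

lemma EReal.le_of_forall_le_coe_imp_le {x y : EReal} (h : ∀ t : ℝ, y ≤ t → x ≤ t) : x ≤ y := by
  by_contra! hlt
  obtain ⟨t, hyt, htx⟩ := EReal.exists_between_coe_real hlt
  exact (h t hyt.le).not_gt htx

section Epigraph

variable {E : Type*} [NormedAddCommGroup E] [InnerProductSpace ℝ E] {ι : Type*}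
  {φ : E → EReal} {w : ι → E} {r s : ι → ℝ} {x₀ : E} {μ : ℝ}

lemma nonpos_of_epigraph (hepi : ∀ x (t : ℝ), φ x ≤ t ↔ ∀ j, ⟪w j, x⟫ + r j * t ≤ s j)
    (hx₀ : φ x₀ = μ) (j : ι) : r j ≤ 0 := by
  by_contra! hr
  set σ := s j - ⟪w j, x₀⟫ - r j * μ
  have hσ : 0 ≤ σ := by linarith [(hepi x₀ μ).1 hx₀.le j]
  have h := (hepi x₀ (μ + (σ + 1) / r j)).1
    (hx₀.trans_le (EReal.coe_le_coe_iff.2 (le_add_of_nonneg_right (by positivity)))) j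
  rw [mul_add, mul_div_cancel₀ _ hr.ne'] at h
  linarith

lemma eventually_inactive_constraints [Finite ι] :
    ∀ᶠ p in 𝓝 (x₀, μ), ∀ j, ⟪w j, x₀⟫ + r j * μ < s j → ⟪w j, p.1⟫ + r j * p.2 ≤ s j := by
  refine eventually_all.2 fun j => ?_
  by_cases hj : ⟪w j, x₀⟫ + r j * μ < s j
  · have hcont : Continuous fun p : E × ℝ => ⟪w j, p.1⟫ + r j * p.2 := by fun_prop
    filter_upwards [(hcont.tendsto (x₀, μ)).eventually_lt_const hj] with p hp _
    exact hp.le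
  · exact .of_forall fun _ hj' => absurd hj' hj

lemma exists_active_of_epigraph [Finite ι]
    (hepi : ∀ x (t : ℝ), φ x ≤ t ↔ ∀ j, ⟪w j, x⟫ + r j * t ≤ s j) (hx₀ : φ x₀ = μ) :
    ∃ j, r j < 0 ∧ ⟪w j, x₀⟫ + r j * μ = s j := by
  by_contra! hinactive
  have hline : Tendsto (fun τ : ℝ => (x₀, μ + τ)) (𝓝 0) (𝓝 (x₀, μ)) :=
    (by fun_prop : Continuous fun τ : ℝ => (x₀, μ + τ)).tendsto' 0 _ (by simp)
  have hbelow : ∀ᶠ τ in 𝓝 (0 : ℝ), φ x₀ ≤ ↑(μ + τ) := by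
    filter_upwards [hline.eventually
      (eventually_inactive_constraints (w := w) (r := r) (s := s))] with τ hτ
    refine (hepi _ _).2 fun j => ?_
    rcases ((hepi x₀ μ).1 hx₀.le j).lt_or_eq with hlt | heq
    · exact hτ j hlt
    · have hr : r j = 0 :=
        (nonpos_of_epigraph hepi hx₀ j).antisymm (not_lt.1 fun hr => hinactive j hr heq)
      simp only [hr, zero_mul, add_zero] at heq ⊢
      exact heq.le
  obtain ⟨τ, hτ, hneg⟩ :=
    ((hbelow.filter_mono (nhdsWithin_le_nhds (s := Iio 0))).and self_mem_nhdsWithin).exists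
  rw [hx₀, EReal.coe_le_coe_iff] at hτ
  linarith [show τ < 0 from hneg]

lemma eventually_le_of_active [Finite ι]
    (hepi : ∀ x (t : ℝ), φ x ≤ t ↔ ∀ j, ⟪w j, x⟫ + r j * t ≤ s j) (hx₀ : φ x₀ = μ) :
    ∀ᶠ x in 𝓝 x₀, ∀ t : ℝ,
      (∀ j, ⟪w j, x₀⟫ + r j * μ = s j → ⟪w j, x - x₀⟫ + r j * (t - μ) ≤ 0) → φ x ≤ t := by
  obtain ⟨j₀, hr₀, hact₀⟩ := exists_active_of_epigraph hepi hx₀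
  have hcurve : Tendsto (fun x => (x, μ + ⟪w j₀, x - x₀⟫ / -r j₀)) (𝓝 x₀) (𝓝 (x₀, μ)) :=
    (by fun_prop : Continuous fun x => (x, μ + ⟪w j₀, x - x₀⟫ / -r j₀)).tendsto' x₀ _
      (by simp)
  filter_upwards [hcurve.eventually
      (eventually_inactive_constraints (w := w) (r := r) (s := s))]
    with x hx t ht
  have ht₀ : μ + ⟪w j₀, x - x₀⟫ / -r j₀ ≤ t := by
    have h := ht j₀ hact₀
    rw [← le_sub_iff_add_le', div_le_iff₀ (neg_pos.2 hr₀)]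
    linarith
  refine (hepi _ _).2 fun j => ?_
  rcases ((hepi x₀ μ).1 hx₀.le j).lt_or_eq with hlt | hact
  · -- inactive constraints only relax as `t` grows, since `r j ≤ 0`
    linarith [hx j hlt, mul_le_mul_of_nonpos_left ht₀ (nonpos_of_epigraph hepi hx₀ j)]
  · have h := ht j hact
    rw [inner_sub_right] at h
    linarith

theorem exists_local_model_of_epigraph [Finite ι]
    (hepi : ∀ x (t : ℝ), φ x ≤ t ↔ ∀ j, ⟪w j, x⟫ + r j * t ≤ s j) (hx₀ : φ x₀ = μ) :
    ∃ (A B : Set ι) (a : ι → E), A.Nonempty ∧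
      (∀ x, ¬ (∀ k : B, ⟪w k, x - x₀⟫ ≤ 0) → φ x = ⊤) ∧
      (∀ x, (∀ k : B, ⟪w k, x - x₀⟫ ≤ 0) → ↑(μ + ⨆ i : A, ⟪a i, x - x₀⟫) ≤ φ x) ∧
      ∀ᶠ x in 𝓝 x₀, (∀ k : B, ⟪w k, x - x₀⟫ ≤ 0) → φ x = ↑(μ + ⨆ i : A, ⟪a i, x - x₀⟫) := by
  let active (j : ι) : Prop := ⟪w j, x₀⟫ + r j * μ = s j
  let A : Set ι := {j | r j < 0 ∧ active j}
  let B : Set ι := {j | r j = 0 ∧ active j}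
  let a (j : ι) : E := (-r j)⁻¹ • w j
  obtain ⟨j₀, hj₀⟩ := exists_active_of_epigraph hepi hx₀
  have : Nonempty A := ⟨⟨j₀, hj₀⟩⟩
  have hiff (d : E) (τ : ℝ) : (∀ j, active j → ⟪w j, d⟫ + r j * τ ≤ 0) ↔
      (∀ k : B, ⟪w k, d⟫ ≤ 0) ∧ ⨆ i : A, ⟪a i, d⟫ ≤ τ := by
    have hneg (j : ι) (hr : r j < 0) : ⟪w j, d⟫ + r j * τ ≤ 0 ↔ ⟪a j, d⟫ ≤ τ := by
      rw [real_inner_smul_left, inv_mul_le_iff₀ (neg_pos.2 hr)]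
      constructor <;> intro <;> linarith
    constructor
    · intro h
      exact ⟨fun k => by simpa [k.2.1] using h k k.2.2,
        ciSup_le fun i => (hneg i i.2.1).1 (h i i.2.2)⟩
    · rintro ⟨hB, hA⟩ j hj
      rcases (nonpos_of_epigraph hepi hx₀ j).lt_or_eq with hr | hr
      · exact (hneg j hr).2 ((le_ciSup (finite_range _).bddAbove (⟨j, hr, hj⟩ : A)).trans hA)
      · simpa [hr] using hB ⟨j, hr, hj⟩
  have hglobal (x : E) (t : ℝ) (ht : φ x ≤ t) :
      (∀ k : B, ⟪w k, x - x₀⟫ ≤ 0) ∧ ⨆ i : A, ⟪a i, x - x₀⟫ ≤ t - μ := by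
    refine (hiff _ _).1 fun j hj => ?_
    rw [inner_sub_right]
    linarith [(hepi _ _).1 ht j, show active j from hj]
  have hlower (x : E) (_ : ∀ k : B, ⟪w k, x - x₀⟫ ≤ 0) :
      ↑(μ + ⨆ i : A, ⟪a i, x - x₀⟫) ≤ φ x :=
    EReal.le_of_forall_le_coe_imp_le fun t ht =>
      EReal.coe_le_coe_iff.2 (by linarith [(hglobal x t ht).2])
  refine ⟨A, B, a, ⟨j₀, hj₀⟩, fun x hx => top_le_iff.1 (EReal.le_of_forall_le_coe_imp_le
    fun t ht => absurd (hglobal x t ht).1 hx), hlower, ?_⟩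
  filter_upwards [eventually_le_of_active hepi hx₀] with x hx hB
  exact le_antisymm (hx _ ((hiff _ _).2 ⟨hB, by linarith⟩)) (hlower x hB)

end Epigraph

section LocalModel

variable {E : Type*} [NormedAddCommGroup E] [InnerProductSpace ℝ E] {ι κ : Type*}
  {a : ι → E} {b : κ → E} {φ : E → EReal} {x₀ : E} {μ : ℝ}

lemma isLocalMinOn_of_local_model [Nonempty ι] {g : E → ℝ}
    (hlocal : ∀ᶠ x in 𝓝 x₀, (∀ k, ⟪b k, x - x₀⟫ ≤ 0) → φ x = ↑(μ + ⨆ i, ⟪a i, x - x₀⟫))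
    (hmin : IsLocalMin (fun x => (g x : EReal) + φ x) x₀) :
    IsLocalMinOn (fun x => g x + ⨆ i, ⟪a i, x - x₀⟫) {x | ∀ k, ⟪b k, x - x₀⟫ ≤ 0} x₀ := by
  have hx₀ : φ x₀ = μ := by simpa using hlocal.self_of_nhds (by simp)
  refine eventually_nhdsWithin_iff.2 ?_
  filter_upwards [hmin, hlocal] with x hxmin hx hT
  rw [hx hT, hx₀, ← EReal.coe_add, ← EReal.coe_add, EReal.coe_le_coe_iff] at hxmin
  simp only [sub_self, inner_zero_right, ciSup_const, add_zero]
  linarith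

lemma eventually_add_eq_iff_of_local_model [Nonempty ι] {g : E → ℝ}
    (htop : ∀ x, ¬ (∀ k, ⟪b k, x - x₀⟫ ≤ 0) → φ x = ⊤)
    (hlocal : ∀ᶠ x in 𝓝 x₀, (∀ k, ⟪b k, x - x₀⟫ ≤ 0) → φ x = ↑(μ + ⨆ i, ⟪a i, x - x₀⟫)) :
    ∀ᶠ x in 𝓝 x₀, ((g x : EReal) + φ x = g x₀ + φ x₀ ↔
      (∀ k, ⟪b k, x - x₀⟫ ≤ 0) ∧ g x + ⨆ i, ⟪a i, x - x₀⟫ = g x₀) := by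
  have hx₀ : φ x₀ = μ := by simpa using hlocal.self_of_nhds (by simp)
  filter_upwards [hlocal] with x hx
  by_cases hT : ∀ k, ⟪b k, x - x₀⟫ ≤ 0
  · rw [hx hT, hx₀, ← EReal.coe_add, ← EReal.coe_add, EReal.coe_eq_coe_iff]
    exact ⟨fun h => ⟨hT, by linarith⟩, fun h => by linarith [h.2]⟩
  · rw [htop x hT, hx₀, EReal.coe_add_top, ← EReal.coe_add]
    simp only [hT, false_and, iff_false]
    exact EReal.top_ne_coe _

end LocalModel

section Subdifferential

variable {n : ℕ} {ι κ : Type*} {a : ι → EuclideanSpace ℝ (Fin n)} {b : κ → EuclideanSpace ℝ (Fin n)}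
  {φ : EuclideanSpace ℝ (Fin n) → EReal} {x₀ : EuclideanSpace ℝ (Fin n)} {μ : ℝ}

theorem ESubdiff_eq_of_local_model (hx₀ : φ x₀ = μ)
    (htop : ∀ x, ¬ (∀ k, ⟪b k, x - x₀⟫ ≤ 0) → φ x = ⊤)
    (hlower : ∀ x, (∀ k, ⟪b k, x - x₀⟫ ≤ 0) → ↑(μ + ⨆ i, ⟪a i, x - x₀⟫) ≤ φ x)
    (hlocal : ∀ᶠ x in 𝓝 x₀, (∀ k, ⟪b k, x - x₀⟫ ≤ 0) → φ x = ↑(μ + ⨆ i, ⟪a i, x - x₀⟫)) :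
    ESubdiff φ x₀ = {ξ | ∀ d, (∀ k, ⟪b k, d⟫ ≤ 0) → ⟪ξ, d⟫ ≤ ⨆ i, ⟪a i, d⟫} := by
  ext ξ
  constructor
  · intro hξ d hd
    have hray : Tendsto (fun c : ℝ => x₀ + c • d) (𝓝[>] 0) (𝓝 x₀) :=
      ((by fun_prop : Continuous fun c : ℝ => x₀ + c • d).tendsto' 0 x₀ (by simp)).mono_left
        nhdsWithin_le_nhds
    obtain ⟨c, hc, hcpos⟩ := ((hray.eventually hlocal).and self_mem_nhdsWithin).exists
    have hcpos : 0 < c := hcpos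
    have h := hξ (x₀ + c • d)
    rw [hx₀, hc fun k => by simpa [real_inner_smul_right] using
      mul_nonpos_of_nonneg_of_nonpos hcpos.le (hd k)] at h
    simp only [add_sub_cancel_left, real_inner_smul_right, ← Real.mul_iSup_of_nonneg hcpos.le,
      ← EReal.coe_add, EReal.coe_le_coe_iff, add_le_add_iff_left] at h
    exact le_of_mul_le_mul_left h hcpos
  · intro hξ x
    rw [hx₀]
    by_cases hT : ∀ k, ⟪b k, x - x₀⟫ ≤ 0
    · rw [← EReal.coe_add]
      exact (EReal.coe_le_coe_iff.2 (by linarith [hξ _ hT])).trans (hlower x hT)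
    · rw [htop x hT]
      exact le_top

theorem normalCone_eq_of_local_model [Finite ι] [Nonempty ι] {v : EuclideanSpace ℝ (Fin n)}
    (hv : v ∈ {ξ | ∀ d, (∀ k, ⟪b k, d⟫ ≤ 0) → ⟪ξ, d⟫ ≤ ⨆ i, ⟪a i, d⟫}) :
    normalCone {ξ | ∀ d, (∀ k, ⟪b k, d⟫ ≤ 0) → ⟪ξ, d⟫ ≤ ⨆ i, ⟪a i, d⟫} v =
      {d | (∀ k, ⟪b k, d⟫ ≤ 0) ∧ ⨆ i, ⟪a i, d⟫ ≤ ⟪v, d⟫} := by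
  ext d
  simp only [normalCone, mem_ofPred_eq, hv, true_and]
  constructor
  · intro hd
    have ha (i : ι) (e : EuclideanSpace ℝ (Fin n))
        (he : ∀ d', (∀ k, ⟪b k, d'⟫ ≤ 0) → ⟪e, d'⟫ ≤ 0) : ⟪a i + e - v, d⟫ ≤ 0 := by
      have h := hd (a i + e) fun d' hd' => by
        rw [inner_add_left]
        linarith [le_ciSup (finite_range fun i => ⟪a i, d'⟫).bddAbove i, he d' hd']
      rwa [real_inner_comm] at h
    obtain ⟨i₀⟩ := ‹Nonempty ι›
    refine ⟨fun k => ?_, ciSup_le fun i => ?_⟩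
    · by_contra! hpos
      have h₀ := ha i₀ 0 (by simp)
      set t := (1 - ⟪a i₀ - v, d⟫) / ⟪b k, d⟫
      have h := ha i₀ (t • b k) fun d' hd' => by
        rw [real_inner_smul_left]
        exact mul_nonpos_of_nonneg_of_nonpos (div_nonneg (by simp at h₀; linarith) hpos.le) (hd' k)
      rw [add_sub_right_comm, inner_add_left, real_inner_smul_left, div_mul_cancel₀ _ hpos.ne'] at h
      linarith
    · have h := ha i 0 (by simp)
      rw [add_zero, inner_sub_left] at h
      linarith
  · rintro ⟨hT, hM⟩ ξ hξ
    rw [inner_sub_right, real_inner_comm ξ d, real_inner_comm v d]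
    linarith [hξ d hT]

end Subdifferential

open Classical in
lemma coe_add_eIndicator {n : ℕ} (c : ℝ) (K : Set (EuclideanSpace ℝ (Fin n)))
    (x : EuclideanSpace ℝ (Fin n)) : (c : EReal) + eIndicator K x = if x ∈ K then ↑c else ⊤ := by
  unfold eIndicator
  split_ifs <;> simp

section Linearization

variable {n : ℕ} {ι κ : Type*} [Nonempty ι] {a : ι → EuclideanSpace ℝ (Fin n)}
  {b : κ → EuclideanSpace ℝ (Fin n)} {g : EuclideanSpace ℝ (Fin n) → ℝ}
  {x₀ v : EuclideanSpace ℝ (Fin n)}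

lemma isLocalMin_linearization
    (hmin : IsLocalMinOn (fun x => g x + ⨆ i, ⟪a i, x - x₀⟫) {x | ∀ k, ⟪b k, x - x₀⟫ ≤ 0} x₀) :
    IsLocalMin (fun x => (↑(g x + ⟪v, x - x₀⟫) : EReal) +
      eIndicator {d | (∀ k, ⟪b k, d⟫ ≤ 0) ∧ ⨆ i, ⟪a i, d⟫ ≤ ⟪v, d⟫} (x - x₀)) x₀ := by
  have hK₀ : (0 : EuclideanSpace ℝ (Fin n)) ∈
      {d | (∀ k, ⟪b k, d⟫ ≤ 0) ∧ ⨆ i, ⟪a i, d⟫ ≤ ⟪v, d⟫} := by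
    simp
  filter_upwards [eventually_nhdsWithin_iff.1 hmin] with x hx
  simp only [coe_add_eIndicator, sub_self, inner_zero_right, add_zero, if_pos hK₀]
  split_ifs with hK
  · have h := hx hK.1
    simp only [sub_self, inner_zero_right, ciSup_const, add_zero] at h
    exact EReal.coe_le_coe_iff.2 (by linarith [hK.2])
  · exact le_top

lemma eventually_levelSet_iff_linearization
    (hcrit : ∀ᶠ x in 𝓝 x₀, (∀ k, ⟪b k, x - x₀⟫ ≤ 0) → g x + ⨆ i, ⟪a i, x - x₀⟫ = g x₀ →
      ⨆ i, ⟪a i, x - x₀⟫ = ⟪v, x - x₀⟫)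
    (hv : ∀ d, (∀ k, ⟪b k, d⟫ ≤ 0) → ⟪v, d⟫ ≤ ⨆ i, ⟪a i, d⟫) :
    ∀ᶠ x in 𝓝 x₀, ((∀ k, ⟪b k, x - x₀⟫ ≤ 0) ∧ g x + ⨆ i, ⟪a i, x - x₀⟫ = g x₀ ↔
      (↑(g x + ⟪v, x - x₀⟫) : EReal) +
          eIndicator {d | (∀ k, ⟪b k, d⟫ ≤ 0) ∧ ⨆ i, ⟪a i, d⟫ ≤ ⟪v, d⟫} (x - x₀) =
        ↑(g x₀ + ⟪v, x₀ - x₀⟫) +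
          eIndicator {d | (∀ k, ⟪b k, d⟫ ≤ 0) ∧ ⨆ i, ⟪a i, d⟫ ≤ ⟪v, d⟫} (x₀ - x₀)) := by
  have hK₀ : (0 : EuclideanSpace ℝ (Fin n)) ∈
      {d | (∀ k, ⟪b k, d⟫ ≤ 0) ∧ ⨆ i, ⟪a i, d⟫ ≤ ⟪v, d⟫} := by
    simp
  filter_upwards [hcrit] with x hx
  simp only [coe_add_eIndicator, sub_self, inner_zero_right, add_zero, if_pos hK₀]
  split_ifs with hK
  · rw [EReal.coe_eq_coe_iff]
    exact ⟨fun ⟨hT, hgx⟩ => by linarith [hx hT hgx],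
      fun h => ⟨hK.1, by linarith [hv _ hK.1, hK.2]⟩⟩
  · exact ⟨fun ⟨hT, hgx⟩ => absurd ⟨hT, (hx hT hgx).le⟩ hK,
      fun h => absurd h (EReal.top_ne_coe _)⟩

end Linearization

theorem stmt12_general (n : ℕ)
    (g : EuclideanSpace ℝ (Fin n) → ℝ) (hg : ContDiff ℝ 1 g)
    (φ : EuclideanSpace ℝ (Fin n) → EReal)
    (hproper : (∀ x, φ x ≠ ⊥) ∧ (∃ x, φ x ≠ ⊤))
    (hpoly : ∃ (m : ℕ) (w : Fin m → EuclideanSpace ℝ (Fin n)) (r s : Fin m → ℝ),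
      {p : EuclideanSpace ℝ (Fin n) × ℝ | φ p.1 ≤ (p.2 : EReal)} =
        {p : EuclideanSpace ℝ (Fin n) × ℝ | ∀ j, (inner ℝ (w j) p.1 : ℝ) + r j * p.2 ≤ s j})
    (xb : EuclideanSpace ℝ (Fin n))
    (hstat : -(gradient g xb) ∈ ESubdiff φ xb)
    (K : Set (EuclideanSpace ℝ (Fin n)))
    (hK : K = normalCone (ESubdiff φ xb) (-(gradient g xb)))
    (ψ : EuclideanSpace ℝ (Fin n) → EReal)
    (hψ : ψ = fun x => (g x : EReal) + φ x)
    (ψt : EuclideanSpace ℝ (Fin n) → EReal)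
    (hψt : ψt = fun x =>
      (((g x - (inner ℝ (gradient g xb) (x - xb) : ℝ)) : ℝ) : EReal) + eIndicator K (x - xb))
    (hloc : IsLocalMin ψ xb) :
    IsLocalMin ψt xb ∧
    ∃ U ∈ nhds xb, {x ∈ U | ψ x = ψ xb} = {x ∈ U | ψt x = ψt xb} := by
  obtain ⟨hbot, y₀, hy₀⟩ := hproper
  obtain ⟨m, w, r, s, hpoly⟩ := hpoly
  have hfin : φ xb ≠ ⊤ := fun h =>
    hy₀ (top_le_iff.1 (by simpa only [h, EReal.top_add_coe] using hstat y₀))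
  have hμ : φ xb = (φ xb).toReal := (EReal.coe_toReal hfin (hbot xb)).symm
  obtain ⟨A, B, a, hA, htop, hlower, hlocal⟩ :=
    exists_local_model_of_epigraph (fun x t => Set.ext_iff.1 hpoly (x, t)) hμ
  have := hA.to_subtype
  rw [ESubdiff_eq_of_local_model hμ htop hlower hlocal] at hstat hK
  rw [normalCone_eq_of_local_model hstat] at hK
  subst hK hψ hψt
  have hmin := isLocalMinOn_of_local_model hlocal hloc
  have hcrit : ∀ᶠ x in 𝓝 xb, (∀ k : B, ⟪w k, x - xb⟫ ≤ 0) →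
      g x + ⨆ i : A, ⟪a i, x - xb⟫ = g xb → ⨆ i : A, ⟪a i, x - xb⟫ = ⟪-gradient g xb, x - xb⟫ := by
    filter_upwards [eventually_fderiv_apply_add_ciSup_eq_zero hg hmin] with x hx hT hgx
    rw [inner_neg_left, inner_gradient_left]
    linarith [hx hT hgx]
  have hlin (x : EuclideanSpace ℝ (Fin n)) :
      g x - ⟪gradient g xb, x - xb⟫ = g x + ⟪-gradient g xb, x - xb⟫ := by
    rw [inner_neg_left, sub_eq_add_neg]
  simp only [hlin]
  obtain ⟨U, hU, hUiff⟩ := ((eventually_add_eq_iff_of_local_model htop hlocal).and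
    (eventually_levelSet_iff_linearization hcrit hstat)).exists_mem
  exact ⟨isLocalMin_linearization hmin,
    U, hU, sep_ext_iff.2 fun x hx => (hUiff x hx).1.trans (hUiff x hx).2⟩

/-- With `ψ = g + φ`, `K = N_{∂φ(x̄)}(−∇g(x̄))` and
`ψ̃(x) = g(x) − ⟨∇g(x̄), x − x̄⟩ + ι_K(x − x̄)`: if `x̄` is a local minimizer of `ψ`,
then it is a local minimizer of `ψ̃`, and `{ψ = ψ(x̄)}` coincides with
`{ψ̃ = ψ̃(x̄)}` on a neighborhood of `x̄`. -/
theorem stmt12 (n : ℕ) (hn : 0 < n)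
    (g : EuclideanSpace ℝ (Fin n) → ℝ) (hg : ContDiff ℝ 1 g)
    (φ : EuclideanSpace ℝ (Fin n) → EReal)
    (hproper : (∀ x, φ x ≠ ⊥) ∧ (∃ x, φ x ≠ ⊤))
    (hpoly : ∃ (m : ℕ) (w : Fin m → EuclideanSpace ℝ (Fin n)) (r s : Fin m → ℝ),
      {p : EuclideanSpace ℝ (Fin n) × ℝ | φ p.1 ≤ (p.2 : EReal)} =
        {p : EuclideanSpace ℝ (Fin n) × ℝ | ∀ j, (inner ℝ (w j) p.1 : ℝ) + r j * p.2 ≤ s j})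
    (xb : EuclideanSpace ℝ (Fin n))
    (hstat : -(gradient g xb) ∈ ESubdiff φ xb)
    (K : Set (EuclideanSpace ℝ (Fin n)))
    (hK : K = normalCone (ESubdiff φ xb) (-(gradient g xb)))
    (ψ : EuclideanSpace ℝ (Fin n) → EReal)
    (hψ : ψ = fun x => (g x : EReal) + φ x)
    (ψt : EuclideanSpace ℝ (Fin n) → EReal)
    (hψt : ψt = fun x =>
      (((g x - (inner ℝ (gradient g xb) (x - xb) : ℝ)) : ℝ) : EReal) + eIndicator K (x - xb))
    (hloc : IsLocalMin ψ xb) :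
    IsLocalMin ψt xb ∧
    ∃ U ∈ nhds xb, {x ∈ U | ψ x = ψ xb} = {x ∈ U | ψt x = ψt xb} :=
  stmt12_general n g hg φ hproper hpoly xb hstat K hK ψ hψ ψt hψt hloc
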